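/- Let X, Y be finite sets, κ : X × Y → ℝ, and S₂ ⊆ Y nonempty. Let Q = K_{XS₂} K_{XS₂}⁺ be the orthogonal projection onto the column space of K_{XS₂}. Then ‖K_{XY} - Q K_{XY}‖_max ≤ max over x ∈ X, y ∈ Y of min over v ∈ S₂ of (|κ(x,y) - κ(x,v)| + ‖K_{Xy} - K_{Xv}‖₂), where K_{Xy} = (κ(w,y))_{w∈X}. -/

import Mathlib

open Matrix

/-- Euclidean norm of a vector. -/
noncomputable def evnorm {n : Type*} [Fintype n] (v : n → ℝ) : ℝ :=
  ‖(WithLp.equiv 2 (n → ℝ)).symm v‖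

/-- Operator 2-norm of a real matrix (induced by Euclidean norms). -/
noncomputable def opNorm {m n : Type*} [Fintype m] [Fintype n] (A : Matrix m n ℝ) : ℝ :=
  letI := Classical.decEq n
  ‖LinearMap.toContinuousLinearMap (Matrix.toEuclideanLin A)‖

/-- The four Penrose conditions: `P` is the Moore–Penrose pseudoinverse of `A`. -/
def IsMoorePenrose {m n : Type*} [Fintype m] [Fintype n]
    (A : Matrix m n ℝ) (P : Matrix n m ℝ) : Prop :=
  A * P * A = A ∧ P * A * P = P ∧ (A * P)ᵀ = A * P ∧ (P * A)ᵀ = P * A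

/-- Entrywise max norm of a matrix. -/
lemma evnorm_eq {n : Type*} [Fintype n] (v : n → ℝ) :
    evnorm v = Real.sqrt (∑ i, v i ^ 2) := by
  simp [evnorm, EuclideanSpace.norm_eq, Real.norm_eq_abs, sq_abs]

lemma evnorm_nonneg' {n : Type*} [Fintype n] (v : n → ℝ) : 0 ≤ evnorm v :=
  norm_nonneg _

lemma abs_le_evnorm {n : Type*} [Fintype n] (v : n → ℝ) (i : n) : |v i| ≤ evnorm v := by
  rw [evnorm_eq]
  calc |v i| = Real.sqrt (v i ^ 2) := (Real.sqrt_sq_eq_abs _).symm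
    _ ≤ _ := Real.sqrt_le_sqrt
        (Finset.single_le_sum (fun j _ => sq_nonneg (v j)) (Finset.mem_univ i))

lemma dot_le_evnorm {n : Type*} [Fintype n] (v w : n → ℝ) :
    v ⬝ᵥ w ≤ evnorm v * evnorm w := by
  have h := real_inner_le_norm ((WithLp.equiv 2 (n → ℝ)).symm v)
      ((WithLp.equiv 2 (n → ℝ)).symm w)
  simpa [evnorm, PiLp.inner_apply, RCLike.inner_apply, conj_trivial, dotProduct, mul_comm] using h

lemma dot_self_eq {n : Type*} [Fintype n] (v : n → ℝ) :
    v ⬝ᵥ v = evnorm v ^ 2 := by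
  rw [evnorm_eq, Real.sq_sqrt (Finset.sum_nonneg fun i _ => sq_nonneg (v i))]
  simp [dotProduct, sq]

lemma proj_contract {n : Type*} [Fintype n] (Q : Matrix n n ℝ)
    (hsym : Qᵀ = Q) (hidem : Q * Q = Q) (d : n → ℝ) :
    evnorm (Q *ᵥ d) ≤ evnorm d := by
  have key : (Q *ᵥ d) ⬝ᵥ (Q *ᵥ d) = (Q *ᵥ d) ⬝ᵥ d := by
    rw [Matrix.dotProduct_mulVec]
    congr 1
    have : (Q *ᵥ d) ᵥ* Q = Qᵀ *ᵥ (Q *ᵥ d) := (Matrix.mulVec_transpose Q _).symm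
    rw [this, hsym, Matrix.mulVec_mulVec, hidem]
  have h1 : evnorm (Q *ᵥ d) ^ 2 ≤ evnorm (Q *ᵥ d) * evnorm d := by
    rw [← dot_self_eq, key]; exact dot_le_evnorm _ _
  nlinarith [evnorm_nonneg' (Q *ᵥ d), evnorm_nonneg' d]

noncomputable def maxNorm {m n : Type*} [Fintype m] [Fintype n] (A : Matrix m n ℝ) : ℝ :=
  ⨆ i, ⨆ j, |A i j|

theorem stmt5 {α β : Type*} (X : Finset α) (Y : Finset β) (κ : α → β → ℝ)
    (S₂ : Finset β) (hS₂Y : S₂ ⊆ Y)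
    (hX : X.Nonempty) (hY : Y.Nonempty) (hS₂ : S₂.Nonempty)
    (P : Matrix S₂ X ℝ)
    (hP : IsMoorePenrose (Matrix.of fun (x : X) (v : S₂) => κ x v) P) :
    maxNorm ((Matrix.of fun (x : X) (y : Y) => κ x y)
        - ((Matrix.of fun (x : X) (v : S₂) => κ x v) * P)
            * (Matrix.of fun (x : X) (y : Y) => κ x y)) ≤
      X.sup' hX fun x => Y.sup' hY fun y =>
        S₂.inf' hS₂ fun v =>
          |κ x y - κ x v|
            + evnorm ((fun w : X => κ w y) - fun w : X => κ w v) := by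
  obtain ⟨h1, h2, h3, h4⟩ := hP
  set A : Matrix X S₂ ℝ := Matrix.of fun (x : X) (v : S₂) => κ x v with hA
  set K : Matrix X Y ℝ := Matrix.of fun (x : X) (y : Y) => κ x y with hK
  set Q : Matrix X X ℝ := A * P with hQ
  have hQsym : Qᵀ = Q := h3
  have hQidem : Q * Q = Q := by
    calc Q * Q = A * (P * A * P) := by simp only [hQ, Matrix.mul_assoc]
    _ = Q := by rw [h2]
  have hQA : Q * A = A := h1
  haveI : Nonempty X := Finset.nonempty_coe_sort.mpr hX
  haveI : Nonempty Y := Finset.nonempty_coe_sort.mpr hY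
  have hmn : maxNorm (K - Q * K) = ⨆ i, ⨆ j, |(K - Q * K) i j| := rfl
  rw [hmn]
  apply ciSup_le; intro x
  apply ciSup_le; intro y
  refine le_trans ?_ (Finset.le_sup' _ x.2)
  refine le_trans ?_ (Finset.le_sup' _ y.2)
  refine Finset.le_inf' hS₂ _ (fun v hv => ?_)
  set colY : ↥X → ℝ := fun w : X => κ w y with hcolY
  set colV : ↥X → ℝ := fun w : X => κ w v with hcolV
  set d : ↥X → ℝ := colY - colV with hd
  have hQcolV : Q *ᵥ colV = colV := by
    funext w
    have h := congrFun (congrFun hQA w) ⟨v, hv⟩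
    simpa [Matrix.mul_apply, Matrix.mulVec, dotProduct, hA, hcolV] using h
  have h5 : (Q *ᵥ d) x = (Q *ᵥ colY) x - colV x := by
    rw [hd, Matrix.mulVec_sub, Pi.sub_apply, hQcolV]
  have hm : (Q * K) x y = (Q *ᵥ colY) x := by
    simp [Matrix.mul_apply, Matrix.mulVec, dotProduct, hcolY, hK]
  have hentry : (K - Q * K) x y = d x - (Q *ᵥ d) x := by
    rw [Matrix.sub_apply, hm, h5]
    simp [hd, hcolY, hcolV, hK]
  have hdx : d x = κ x y - κ x v := by simp [hd, hcolY, hcolV]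
  calc |(K - Q * K) x y| = |d x - (Q *ᵥ d) x| := by rw [hentry]
    _ ≤ |d x| + |(Q *ᵥ d) x| := abs_sub _ _
    _ ≤ |d x| + evnorm (Q *ᵥ d) := by
        gcongr; exact abs_le_evnorm _ _
    _ ≤ |d x| + evnorm d := by
        gcongr ?_ + ?_; · exact le_rfl
        · exact proj_contract Q hQsym hQidem d
    _ = |κ ↑x ↑y - κ ↑x v| + evnorm d := by rw [hdx]
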